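/- arXiv:1507.06849 — 6 statements merged into one kernel-verified Lean document; each statement's English description precedes it below -/
import Mathlib

section
/- Let p be prime, 1 ≤ h ≤ r integers, q = p^h, s = ⌈r/h⌉, and let π : 𝔽_q^s → 𝔽_p^r be a surjective 𝔽_p-linear map (viewing 𝔽_q^s as an 𝔽_p-vector space). Let a_1,…,a_n ∈ 𝔽_q^s and for each i let H_i ≤ 𝔽_p^r be an 𝔽_p-subspace of dimension h containing π(span_{𝔽_q}{a_i}). If for every choice of indices 1 ≤ i_1 < … < i_m ≤ n the 𝔽_q-span of {a_{i_1},…,a_{i_m}} is all of 𝔽_q^s, then for every such choice of indices the 𝔽_p-span of H_{i_1} ∪ … ∪ H_{i_m} is all of 𝔽_p^r. -/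
/-- Lemma 1 of the paper. `GaloisField p h` plays the role of `𝔽_q` with
`q = p^h`. `π` is a surjective `𝔽_p`-linear map `𝔽_q^s → 𝔽_p^r` where `s = ⌈r/h⌉`,
each `H i` is an `h`-dimensional `𝔽_p`-subspace of `𝔽_p^r` containing
`π(span_{𝔽_q}{a i})`. If every `m` of the `a i` span `𝔽_q^s` over `𝔽_q`, then every
`m` of the `H i` span `𝔽_p^r` over `𝔽_p`. -/
theorem stmt0 {p h r s n m : ℕ} [Fact p.Prime] (hh : 1 ≤ h) (hhr : h ≤ r)
    (hs : s = (r + h - 1) / h)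
    (π : (Fin s → GaloisField p h) →ₗ[ZMod p] (Fin r → ZMod p))
    (hπ : Function.Surjective π)
    (a : Fin n → Fin s → GaloisField p h)
    (H : Fin n → Submodule (ZMod p) (Fin r → ZMod p))
    (hdim : ∀ i, Module.finrank (ZMod p) (H i) = h)
    (hcont : ∀ i, π '' (Submodule.span (GaloisField p h) {a i} : Set (Fin s → GaloisField p h))
      ⊆ (H i : Set (Fin r → ZMod p)))
    (hgen : ∀ S : Finset (Fin n), S.card = m →
      Submodule.span (GaloisField p h) (a '' (S : Set (Fin n))) = ⊤) :
    ∀ S : Finset (Fin n), S.card = m → (⨆ i ∈ S, H i) = ⊤ := by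
  intro S hS
  rw [eq_top_iff]
  intro v _
  obtain ⟨u, rfl⟩ := hπ v
  have hu : u ∈ Submodule.span (GaloisField p h) (a '' (S : Set (Fin n))) := by
    rw [hgen S hS]; trivial
  have key : ∀ c : GaloisField p h, π (c • u) ∈ ⨆ i ∈ S, H i := by
    refine Submodule.span_induction ?_ ?_ ?_ ?_ hu
    · rintro x ⟨i, hi, rfl⟩ c
      have hx : c • a i ∈ Submodule.span (GaloisField p h) {a i} :=
        Submodule.smul_mem _ _ (Submodule.mem_span_singleton_self _)
      have : π (c • a i) ∈ H i := hcont i ⟨c • a i, hx, rfl⟩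
      exact Submodule.mem_iSup_of_mem i (Submodule.mem_iSup_of_mem hi this)
    · intro c; simp
    · intro x y _ _ hx hy c
      rw [smul_add, map_add]
      exact Submodule.add_mem _ (hx c) (hy c)
    · intro d x _ hx c
      rw [smul_smul]
      exact hx (c * d)
  simpa using key 1
end

section
/- Let p ≥ 2 be an integer and let k ∈ ℤ be minimal with 2^k ≥ p/3. Then for every integer j with j ≢ 0 (mod p) there exists l with 0 ≤ l ≤ k such that |2^l j|_p ≥ p/3, where |x|_p denotes the distance from x to the nearest integer multiple of p. -/
/-- `distToMultiples d x` is the distance from `x` to the nearest integer multiple of `d`. -/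
noncomputable def distToMultiples (d x : ℝ) : ℝ := ⨅ m : ℤ, |x - d * m|

lemma abs_sub_round_le (x : ℝ) (m : ℤ) : |x - round x| ≤ |x - m| := by
  rcases le_or_gt (1/2) |x - m| with h | h
  · exact (abs_sub_round x).trans h
  · have : round x = m := by
      rw [abs_lt] at h
      rw [round_eq, Int.floor_eq_iff]
      constructor <;> push_cast <;> linarith
    rw [this]

lemma distToMultiples_eq (d x : ℝ) (hd : 0 < d) :
    distToMultiples d x = |x - d * round (x / d)| := by
  have key : ∀ m : ℤ, |x - d * m| = d * |x / d - m| := by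
    intro m
    have h1 : x - d * m = d * (x / d - m) := by field_simp
    rw [h1, abs_mul, abs_of_pos hd]
  apply le_antisymm
  · exact ciInf_le ⟨0, by rintro _ ⟨m, rfl⟩; positivity⟩ _
  · apply le_ciInf
    intro m
    rw [key m, key (round (x/d))]
    exact mul_le_mul_of_nonneg_left (abs_sub_round_le _ m) hd.le

/-- Let `p ≥ 2` and let `k` be minimal with `2^k ≥ p/3`. Then for every
integer `j` not divisible by `p` there is `0 ≤ l ≤ k` with `|2^l j|_p ≥ p/3`. -/
theorem stmt3 (p : ℕ) (hp : 2 ≤ p) (k : ℕ)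
    (hk : (p : ℝ) / 3 ≤ 2 ^ k) (hkmin : ∀ k' : ℕ, k' < k → (2 : ℝ) ^ k' < p / 3) :
    ∀ j : ℤ, ¬ ((p : ℤ) ∣ j) →
      ∃ l : ℕ, l ≤ k ∧ (p : ℝ) / 3 ≤ distToMultiples p (2 ^ l * (j : ℝ)) := by
  intro j hj
  have hp0 : (0:ℝ) < p := by positivity
  set D : ℕ → ℝ := fun l => distToMultiples p (2 ^ l * (j : ℝ)) with hD
  have main : ∀ l : ℕ, l ≤ k →
      (∃ l' : ℕ, l' ≤ k ∧ (p : ℝ) / 3 ≤ D l') ∨ (2:ℝ) ^ l ≤ D l := by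
    intro l
    induction l with
    | zero =>
      intro _
      right
      rw [hD]
      simp only [pow_zero, one_mul]
      rw [distToMultiples_eq _ _ hp0]
      have hz : ((j : ℝ) - p * round ((j:ℝ) / p)) = ((j - p * round ((j:ℝ)/p) : ℤ) : ℝ) := by
        push_cast; ring
      rw [hz]
      have hne : (j - p * round ((j:ℝ)/p) : ℤ) ≠ 0 := by
        intro h
        exact hj ⟨round ((j:ℝ)/p), by linarith [sub_eq_zero.mp h]⟩
      calc (1:ℝ) = ((1:ℤ):ℝ) := by norm_num
        _ ≤ |((j - p * round ((j:ℝ)/p) : ℤ) : ℝ)| := by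
            rw [← Int.cast_abs]; exact_mod_cast Int.one_le_abs hne
    | succ l ih =>
      intro hl1
      rcases ih (le_of_lt hl1) with h | h
      · exact Or.inl h
      rcases le_or_gt ((p:ℝ)/3) (D l) with hbig | hsmall
      · exact Or.inl ⟨l, le_of_lt hl1, hbig⟩
      rcases le_or_gt ((p:ℝ)/3) (D (l+1)) with hbig | hsmall'
      · exact Or.inl ⟨l+1, hl1, hbig⟩
      right
      set m := round ((2:ℝ) ^ l * j / p) with hm
      have hDl : D l = |(2:ℝ) ^ l * j - p * m| := distToMultiples_eq _ _ hp0
      have hlow : min (2 * D l) ((p:ℝ) - 2 * D l) ≤ D (l+1) := by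
        apply le_ciInf
        intro n
        have hN : ((n - 2*m : ℤ) : ℝ) = (n:ℝ) - 2*m := by push_cast; ring
        have hrw : (2:ℝ) ^ (l+1) * j - p * n
            = 2 * ((2:ℝ)^l * j - p * m) - p * ((n - 2*m : ℤ):ℝ) := by
          rw [hN]; push_cast; ring
        rw [hrw]
        rcases eq_or_ne (n - 2*m) 0 with h0 | h0
        · rw [h0]
          simp only [Int.cast_zero, mul_zero, sub_zero]
          rw [abs_mul, abs_two, ← hDl]
          exact min_le_left _ _
        · refine le_trans (min_le_right _ _) ?_
          have h1 : (1:ℝ) ≤ |((n - 2*m : ℤ):ℝ)| := by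
            rw [← Int.cast_abs]; exact_mod_cast Int.one_le_abs h0
          have h2 : (p:ℝ) ≤ |(p:ℝ) * ((n - 2*m : ℤ):ℝ)| := by
            rw [abs_mul, abs_of_pos hp0]; nlinarith
          have h3 : |2 * ((2:ℝ)^l * j - p * m)| = 2 * D l := by
            rw [abs_mul, abs_two, ← hDl]
          have h4 := abs_sub_abs_le_abs_sub ((p:ℝ) * ((n-2*m:ℤ):ℝ))
            (2 * ((2:ℝ)^l * j - p * m))
          rw [abs_sub_comm]
          linarith
      have h2Dl : 2 * D l ≤ D (l+1) := by
        rcases min_cases (2 * D l) ((p:ℝ) - 2 * D l) with ⟨he, _⟩ | ⟨he, _⟩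
        · rwa [he] at hlow
        · rw [he] at hlow; linarith
      calc (2:ℝ) ^ (l+1) = 2 * 2 ^ l := by ring
        _ ≤ 2 * D l := by linarith
        _ ≤ D (l+1) := h2Dl
  rcases main k le_rfl with ⟨l', hl', hd⟩ | h
  · exact ⟨l', hl', hd⟩
  · exact ⟨k, le_rfl, le_trans hk h⟩
end

section
/- Let f(x) = Σ_{y=0}^{p-1} a_y ω_p^{xy} with ω_p = e^{2πi/p}, and suppose there is y' with |a_{y'}| > 2 Σ_{y ≠ y'}|a_y|. Then for every x ∈ 𝔽_p, |arg(f(x)/f(0)) − arg(ω_p^{x y'})|_{2π} < π/3, where |·|_{2π} denotes distance to the nearest integer multiple of 2π. -/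
/-!
Factoring out the dominant term, `f x = a y' ω^{x y'} (1 + z x)` with `‖z x‖ < 1/2`. The disc of
radius `1/2` about `1` is seen from the origin under the half-angle `arcsin (1/2) = π/6`, so
`f x / f 0 = ω^{x y'} (1 + z x) / (1 + z 0)` has argument within `π/6 + π/6` of that of
`ω^{x y'}`, modulo `2π`.
-/

open Complex Real Finset

lemma distToMultiples_le (d x : ℝ) (m : ℤ) : distToMultiples d x ≤ |x - d * m| :=
  ciInf_le ⟨0, by rintro _ ⟨n, rfl⟩; exact abs_nonneg _⟩ m

lemma distToMultiples_two_pi_le_of_coe_eq {x y : ℝ} (h : (x : Angle) = y) :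
    distToMultiples (2 * π) x ≤ |y| := by
  obtain ⟨k, hk⟩ := Angle.angle_eq_iff_two_pi_dvd_sub.mp h
  calc distToMultiples (2 * π) x ≤ |x - 2 * π * k| := distToMultiples_le _ _ k
    _ = |y| := by rw [show x - 2 * π * k = y by linarith]

lemma coe_arg_mul_div_sub_arg {u v w : ℂ} (hu : u ≠ 0) (hv : v ≠ 0) (hw : w ≠ 0) :
    ((arg (u * (v / w)) - arg u : ℝ) : Angle) = (arg v - arg w : ℝ) := by
  rw [Angle.coe_sub, arg_mul_coe_angle hu (div_ne_zero hv hw), arg_div_coe_angle hv hw,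
    Angle.coe_sub]
  abel

lemma abs_im_lt_norm_div_two_of_norm_sub_one_lt {w : ℂ} (hw : ‖w - 1‖ < 1 / 2) :
    |w.im| < ‖w‖ / 2 := by
  have hdisc : (w.re - 1) ^ 2 + w.im ^ 2 < 1 / 4 := by
    have := sq_lt_sq' (by linarith [norm_nonneg (w - 1)]) hw
    rwa [← normSq_eq_norm_sq, normSq_apply, sub_re, sub_im, one_re, one_im, sub_zero,
      ← sq, ← sq, show ((1 : ℝ) / 2) ^ 2 = 1 / 4 by norm_num] at this
  have hsq : w.im ^ 2 < (‖w‖ / 2) ^ 2 := by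
    rw [div_pow, ← normSq_eq_norm_sq, normSq_apply]
    nlinarith [sq_nonneg (2 * w.re - 3 / 2)]
  exact abs_lt_of_sq_lt_sq hsq (by positivity)

lemma abs_arg_lt_pi_div_six_of_norm_sub_one_lt {w : ℂ} (hw : ‖w - 1‖ < 1 / 2) :
    |arg w| < π / 6 := by
  have hre : 0 ≤ w.re := by
    have := neg_abs_le (w - 1).re
    have := (abs_re_le_norm (w - 1)).trans hw.le
    rw [sub_re, one_re] at *
    linarith
  have hw0 : w ≠ 0 := by rintro rfl; norm_num at hw
  have hsin : |w.im / ‖w‖| < 1 / 2 := by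
    rw [abs_div, abs_norm, div_lt_iff₀ (norm_pos_iff.mpr hw0)]
    linarith [abs_im_lt_norm_div_two_of_norm_sub_one_lt hw]
  have hpi := pi_pos
  rw [arg_of_re_nonneg hre, abs_lt]
  constructor
  · rw [lt_arcsin_iff_sin_lt' ⟨by linarith, by linarith⟩, Real.sin_neg, sin_pi_div_six]
    linarith [neg_abs_le (w.im / ‖w‖)]
  · rw [arcsin_lt_iff_lt_sin' ⟨by linarith, by linarith⟩, sin_pi_div_six]
    linarith [le_abs_self (w.im / ‖w‖)]

lemma norm_sum_mul_div_sub_one_lt {ι : Type*} [Fintype ι] [DecidableEq ι] (a : ι → ℂ)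
    (u : ι → Circle) (i : ι) (h : 2 * ∑ j ∈ univ.erase i, ‖a j‖ < ‖a i‖) :
    ‖(∑ j, a j * u j) / (a i * u i) - 1‖ < 1 / 2 := by
  have hai : 0 < ‖a i‖ := lt_of_le_of_lt (by positivity) h
  have hrest : ‖∑ j ∈ univ.erase i, a j * u j‖ ≤ ∑ j ∈ univ.erase i, ‖a j‖ :=
    (norm_sum_le _ _).trans_eq (by simp only [norm_mul, Circle.norm_coe, mul_one])
  have hne : a i * u i ≠ 0 := mul_ne_zero (norm_pos_iff.mp hai) (Circle.coe_ne_zero _)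
  rw [← add_sum_erase _ _ (mem_univ i), add_div, div_self hne, add_sub_cancel_left, norm_div,
    norm_mul, Circle.norm_coe, mul_one, div_lt_iff₀ hai]
  linarith

/-- If `f(x) = Σ_y a_y ω_p^{xy}` with `ω_p = e^{2πi/p}` and there is `y'`
with `|a_{y'}| > 2 Σ_{y ≠ y'} |a_y|`, then for every `x ∈ 𝔽_p`,
`|arg(f(x)/f(0)) − arg(ω_p^{x y'})|_{2π} < π/3`. -/
theorem stmt5 (p : ℕ) [Fact p.Prime] (a f : ZMod p → ℂ)
    (hf : ∀ x, f x = ∑ y : ZMod p,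
      a y * Complex.exp (2 * Real.pi * Complex.I * ((x * y : ZMod p).val : ℂ) / p))
    (y' : ZMod p)
    (hy' : 2 * ∑ y ∈ Finset.univ.erase y', ‖a y‖ < ‖a y'‖) :
    ∀ x : ZMod p,
      distToMultiples (2 * Real.pi)
        (Complex.arg (f x / f 0) -
          Complex.arg (Complex.exp (2 * Real.pi * Complex.I * ((x * y' : ZMod p).val : ℂ) / p)))
        < Real.pi / 3 := by
  intro x
  simp only [← ZMod.toCircle_apply] at hf ⊢
  set w : ZMod p → ℂ := fun t ↦ f t / (a y' * ZMod.toCircle (t * y'))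
  have hw : ∀ t, ‖w t - 1‖ < 1 / 2 := fun t ↦ by
    simpa only [w, hf] using norm_sum_mul_div_sub_one_lt a (fun y ↦ ZMod.toCircle (t * y)) y' hy'
  have hw0 : ∀ t, w t ≠ 0 := fun t h ↦ by
    have := hw t
    norm_num [h] at this
  have hay' : a y' ≠ 0 := norm_pos_iff.mp (lt_of_le_of_lt (by positivity) hy')
  have hquot : f x / f 0 = ZMod.toCircle (x * y') * (w x / w 0) := by
    simp only [w, zero_mul, AddChar.map_zero_eq_one, Circle.coe_one, mul_one]
    field_simp [hay', Circle.coe_ne_zero]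
  calc distToMultiples (2 * π) (arg (f x / f 0) - arg (ZMod.toCircle (x * y') : ℂ))
      ≤ |arg (w x) - arg (w 0)| := by
        rw [hquot]
        exact distToMultiples_two_pi_le_of_coe_eq
          (coe_arg_mul_div_sub_arg (Circle.coe_ne_zero _) (hw0 x) (hw0 0))
    _ ≤ |arg (w x)| + |arg (w 0)| := abs_sub _ _
    _ < π / 6 + π / 6 := add_lt_add (abs_arg_lt_pi_div_six_of_norm_sub_one_lt (hw x))
        (abs_arg_lt_pi_div_six_of_norm_sub_one_lt (hw 0))
    _ = π / 3 := by ring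
end

section
/- Let t, r ≥ 1 and let p be a prime. Let h ∈ ℤ be minimal such that h ≥ 1 and 4t(⌈r/h⌉ − 1) ≤ p^h, and set n := 4t(⌈r/h⌉ − 1) + 1. Then n·p^h < 16·p·t²·r². -/
/-- Let `t, r ≥ 1`, `p` prime, `h` minimal with `h ≥ 1` and
`4t(⌈r/h⌉ − 1) ≤ p^h` (here `⌈r/h⌉ = (r + h - 1)/h` in natural number arithmetic),
and `n := 4t(⌈r/h⌉ − 1) + 1`. Then `n·p^h < 16·p·t²·r²`. -/
theorem stmt7 (t r p h n : ℕ) (ht : 1 ≤ t) (hr : 1 ≤ r) (hp : p.Prime)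
    (hh1 : 1 ≤ h) (hh2 : 4 * t * ((r + h - 1) / h - 1) ≤ p ^ h)
    (hmin : ∀ h' : ℕ, 1 ≤ h' → 4 * t * ((r + h' - 1) / h' - 1) ≤ p ^ h' → h ≤ h')
    (hn : n = 4 * t * ((r + h - 1) / h - 1) + 1) :
    n * p ^ h < 16 * p * t ^ 2 * r ^ 2 := by
  have hp2 : 2 ≤ p := hp.two_le
  have hceil : ∀ k : ℕ, 1 ≤ k → (r + k - 1) / k ≤ r := by
    intro k hk
    have h1 : r + k - 1 ≤ r * k := by
      obtain ⟨a, rfl⟩ := Nat.exists_eq_add_of_le hr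
      obtain ⟨b, rfl⟩ := Nat.exists_eq_add_of_le hk
      have he : 1 + a + (1 + b) - 1 = 1 + a + b := by omega
      rw [he]; nlinarith
    calc (r + k - 1) / k ≤ r * k / k := Nat.div_le_div_right h1
      _ = r := Nat.mul_div_cancel r hk
  have hn4 : n ≤ 4 * t * r := by
    have hc := hceil h hh1
    have h1 : (r + h - 1) / h - 1 ≤ r - 1 := by omega
    have h2 : 4 * t * ((r + h - 1) / h - 1) ≤ 4 * t * (r - 1) :=
      Nat.mul_le_mul_left _ h1
    have h3 : 4 * t * (r - 1) + 4 * t = 4 * t * r := by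
      have : r - 1 + 1 = r := by omega
      calc 4 * t * (r - 1) + 4 * t = 4 * t * (r - 1 + 1) := by ring
        _ = 4 * t * r := by rw [this]
    omega
  rcases Nat.lt_or_ge h 2 with hcase | hcase
  · have hh : h = 1 := by omega
    subst hh
    have hpow : p ^ 1 = p := pow_one p
    rw [hpow]
    have h4 : n * p ≤ 4 * t * r * p := Nat.mul_le_mul_right p hn4
    have h1 : 1 ≤ t * r := Nat.one_le_iff_ne_zero.mpr (by positivity)
    have h2 : 16 * (t * r) * 1 ≤ 16 * (t * r) * (t * r) := Nat.mul_le_mul_left _ h1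
    have hA : 4 * t * r < 16 * t ^ 2 * r ^ 2 := by nlinarith
    calc n * p ≤ 4 * t * r * p := h4
      _ < 16 * t ^ 2 * r ^ 2 * p := Nat.mul_lt_mul_of_lt_of_le hA (le_refl p) (by omega)
      _ = 16 * p * t ^ 2 * r ^ 2 := by ring
  · set k := h - 1 with hk
    have hk1 : 1 ≤ k := by omega
    have hlt : p ^ k < 4 * t * ((r + k - 1) / k - 1) := by
      by_contra hc
      push_neg at hc
      have := hmin k hk1 hc
      omega
    have hck := hceil k hk1
    have hlt2 : p ^ k < 4 * t * r := by
      have h1 : (r + k - 1) / k - 1 ≤ r := by omega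
      have h2 : 4 * t * ((r + k - 1) / k - 1) ≤ 4 * t * r :=
        Nat.mul_le_mul_left _ h1
      omega
    have hph : p ^ h = p * p ^ k := by
      rw [show h = k + 1 by omega, pow_succ]; ring
    have hphb : p ^ h < p * (4 * t * r) := by
      rw [hph]
      exact Nat.mul_lt_mul_of_le_of_lt (le_refl p) hlt2 (by omega)
    calc n * p ^ h ≤ 4 * t * r * p ^ h := Nat.mul_le_mul_right _ hn4
      _ < 4 * t * r * (p * (4 * t * r)) := by
          apply Nat.mul_lt_mul_of_le_of_lt (le_refl _) hphb (by positivity)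
      _ = 16 * p * t ^ 2 * r ^ 2 := by ring
end

section
/- Let H₁,…,H_n ≤ 𝔽_p^r be m-generating subspaces with n = 4t(m−1)+1, and let f : 𝔽_p^r → ℂ with Fourier coefficients a_χ = f̂(χ). Write f̂ = ĝ + ε where ĝ has support of size at most t. Then for every character χ_z of 𝔽_p^r, the number of indices i ∈ {1,…,n} with Σ_{χ ∈ χ_z H_i^⊥ \ {χ_z}} |a_χ| ≤ ‖ε‖₁ / t is at least 2t(m−1)+1. -/
/-!
Write `S i` for the punctured coset `χ_z H_i^⊥ \ {χ_z}`. A character `χ_y ≠ χ_z` lies in `S i`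
exactly when `H i` is annihilated by `y - z ≠ 0`; since any `m` of the `H i` span, this happens for
at most `m - 1` indices. Double counting with this multiplicity bound shows that at most `t(m-1)`
of the sets `S i` meet the support of `ĝ`, and, Markov-style, at most `t(m-1)` of them carry
`ε`-mass above `‖ε‖₁/t`. On each of the remaining `n - 2t(m-1) = 2t(m-1) + 1` sets, `a` agrees
with `ε`, so its mass there is at most `‖ε‖₁/t`.
-/

open Finset

section DoubleCounting

variable {ι α : Type*} [Fintype ι] [DecidableEq α] {S : ι → Finset α} {M : ℕ}

theorem sum_sum_le_mul_sum_of_card_filter_mem_le [Fintype α] (hS : ∀ y, #{i | y ∈ S i} ≤ M)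
    {w : α → ℝ} (hw : ∀ y, 0 ≤ w y) :
    ∑ i, ∑ y ∈ S i, w y ≤ M * ∑ y, w y :=
  calc ∑ i, ∑ y ∈ S i, w y = ∑ y, ∑ i ∈ {i | y ∈ S i}, w y :=
        sum_comm' fun i y => by simp
    _ = ∑ y, #{i | y ∈ S i} * w y := by simp only [sum_const, nsmul_eq_mul]
    _ ≤ ∑ y, M * w y := sum_le_sum fun y _ => by gcongr; exacts [hw y, mod_cast hS y]
    _ = M * ∑ y, w y := (mul_sum _ _ _).symm

theorem card_filter_inter_nonempty_le (hS : ∀ y, #{i | y ∈ S i} ≤ M) (G : Finset α) :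
    #{i | (S i ∩ G).Nonempty} ≤ #G * M := by
  simpa using card_mul_le_card_mul (m := 1) (fun i y => y ∈ S i)
    (fun i hi => by
      simpa [bipartiteAbove, one_le_card, filter_mem_eq_inter, inter_comm]
        using (mem_filter.1 hi).2)
    (fun y _ => (card_le_card (monotone_filter_left _ (subset_univ _))).trans (hS y))

theorem card_filter_div_lt_sum_le [Fintype α] (hS : ∀ y, #{i | y ∈ S i} ≤ M) {w : α → ℝ}
    (hw : ∀ y, 0 ≤ w y) {t : ℕ} (ht : 0 < t) :
    #{i | (∑ y, w y) / t < ∑ y ∈ S i, w y} ≤ t * M := by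
  set W := ∑ y, w y
  set B : Finset ι := {i | W / t < ∑ y ∈ S i, w y}
  by_contra! hB
  have htR : (0 : ℝ) < t := by exact_mod_cast ht
  have hBW : #B * (W / t) < M * W :=
    calc #B * (W / t) = ∑ i ∈ B, W / t := by rw [sum_const, nsmul_eq_mul]
      _ < ∑ i ∈ B, ∑ y ∈ S i, w y :=
        sum_lt_sum_of_nonempty (card_pos.1 (by omega)) fun i hi => (mem_filter.1 hi).2
      _ ≤ ∑ i, ∑ y ∈ S i, w y :=
        sum_le_sum_of_subset_of_nonneg (subset_univ _) fun i _ _ => sum_nonneg fun y _ => hw y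
      _ ≤ M * W := sum_sum_le_mul_sum_of_card_filter_mem_le hS hw
  have hW : 0 ≤ W := sum_nonneg fun y _ => hw y
  have hB' : (t * M : ℝ) < #B := by exact_mod_cast hB
  rw [mul_div_assoc', div_lt_iff₀ htR] at hBW
  nlinarith [mul_nonneg (sub_nonneg.2 hB'.le) hW]

theorem card_filter_lt_sum_norm_le [Fintype α] [DecidableEq ι] {E : Type*}
    [SeminormedAddCommGroup E] [DecidableEq E] (hS : ∀ y, #{i | y ∈ S i} ≤ M) {a g ε : α → E}
    (hag : a = g + ε) {t : ℕ} (hg : #{y | g y ≠ 0} ≤ t) (ht : 0 < t) :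
    #{i | (∑ y, ‖ε y‖) / t < ∑ y ∈ S i, ‖a y‖} ≤ 2 * t * M := by
  set G : Finset α := {y | g y ≠ 0}
  have hsplit : ({i | (∑ y, ‖ε y‖) / t < ∑ y ∈ S i, ‖a y‖} : Finset ι) ⊆
      ({i | (S i ∩ G).Nonempty} : Finset ι) ∪
        ({i | (∑ y, ‖ε y‖) / t < ∑ y ∈ S i, ‖ε y‖} : Finset ι) := by
    intro i hi
    by_cases hG : (S i ∩ G).Nonempty
    · simp [hG]
    have hsum : ∑ y ∈ S i, ‖a y‖ = ∑ y ∈ S i, ‖ε y‖ := sum_congr rfl fun y hy => by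
      have : g y = 0 := by
        by_contra h
        exact hG ⟨y, mem_inter.2 ⟨hy, mem_filter.2 ⟨mem_univ _, h⟩⟩⟩
      simp [hag, this]
    simp only [mem_filter, mem_univ, true_and, mem_union, hG, false_or] at hi ⊢
    rwa [← hsum]
  calc _ ≤ #G * M + t * M := (card_le_card hsplit).trans <| (card_union_le _ _).trans <|
        add_le_add (card_filter_inter_nonempty_le hS G)
          (card_filter_div_lt_sum_le hS (fun y => norm_nonneg _) ht)
    _ ≤ t * M + t * M := by gcongr
    _ = 2 * t * M := by ring

end DoubleCounting

theorem card_lt_of_forall_le_of_ne_top {R V ι : Type*} [Semiring R] [AddCommMonoid V]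
    [Module R V] {H : ι → Submodule R V} {m : ℕ}
    (hgen : ∀ T : Finset ι, #T = m → ⨆ i ∈ T, H i = ⊤) {N : Submodule R V} (hN : N ≠ ⊤)
    {T : Finset ι} (hT : ∀ i ∈ T, H i ≤ N) : #T < m := by
  by_contra! hm
  obtain ⟨T', hT', hcard⟩ := exists_subset_card_eq hm
  exact hN <| top_le_iff.1 <| hgen T' hcard ▸ iSup₂_le fun i hi => hT i (hT' hi)

theorem card_lt_of_forall_dotProduct_eq_zero {K ι κ : Type*} [CommSemiring K] [Fintype κ]
    {H : ι → Submodule K (κ → K)} {m : ℕ}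
    (hgen : ∀ T : Finset ι, #T = m → ⨆ i ∈ T, H i = ⊤) {w : κ → K} (hw : w ≠ 0)
    {T : Finset ι} (hT : ∀ i ∈ T, ∀ x ∈ H i, x ⬝ᵥ w = 0) : #T < m := by
  refine card_lt_of_forall_le_of_ne_top hgen (N := LinearMap.ker ((dotProductBilin K K).flip w))
    (fun h => hw <| dotProduct_eq_zero w fun x => ?_) fun i hi x hx => hT i hi x hx
  rw [dotProduct_comm]
  exact (LinearMap.ext_iff.1 (LinearMap.ker_eq_top.1 h)) x

/-- Lemma 8 of the paper: characters of `𝔽_p^r` are indexed by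
`𝔽_p^r` itself via `χ_y(x) = ω_p^{⟨x,y⟩}`; under this indexing the coset
`χ_z H_i^⊥` corresponds to `{y | ∀ x ∈ H_i, ⟨x, y − z⟩ = 0}`. If `H₁,…,H_n` are
`m`-generating with `n = 4t(m−1)+1`, and `f̂ = ĝ + ε` with `|supp ĝ| ≤ t`, then for
every `z` at least `2t(m−1)+1` indices `i` satisfy
`Σ_{χ_y ∈ χ_z H_i^⊥ \ {χ_z}} |f̂(χ_y)| ≤ ‖ε‖₁/t`. -/
theorem stmt10 {p r t m n : ℕ} [Fact p.Prime] (ht : 1 ≤ t)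
    (hn : n = 4 * t * (m - 1) + 1)
    (H : Fin n → Submodule (ZMod p) (Fin r → ZMod p))
    (hgen : ∀ S : Finset (Fin n), S.card = m → (⨆ i ∈ S, H i) = ⊤)
    (a g ε : (Fin r → ZMod p) → ℂ)
    (hag : a = g + ε)
    (hg : {y | g y ≠ 0}.ncard ≤ t) :
    ∀ z : Fin r → ZMod p,
      2 * t * (m - 1) + 1 ≤
        {i : Fin n |
          (∑ᶠ y ∈ {y : Fin r → ZMod p | y ≠ z ∧ ∀ x ∈ H i, ∑ j, x j * (y j - z j) = 0},
            ‖a y‖) ≤ (∑ y, ‖ε y‖) / t}.ncard := by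
  classical
  intro z
  set S : Fin n → Finset (Fin r → ZMod p) := fun i => {y | y ≠ z ∧ ∀ x ∈ H i, x ⬝ᵥ (y - z) = 0}
  have hmult : ∀ y, #{i | y ∈ S i} ≤ m - 1 := by
    intro y
    by_cases hyz : y = z
    · simp [S, hyz]
    · have := card_lt_of_forall_dotProduct_eq_zero hgen (sub_ne_zero.2 hyz)
        (T := {i | y ∈ S i}) fun i hi => by
          simp only [S, mem_filter, mem_univ, true_and] at hi
          exact hi.2
      omega
  have hg' : #{y | g y ≠ 0} ≤ t := by
    rwa [← Set.ncard_coe_finset, coe_filter_univ]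
  have hbad := card_filter_lt_sum_norm_le hmult hag hg' ht
  set good : Finset (Fin n) := {i | ∑ y ∈ S i, ‖a y‖ ≤ (∑ y, ‖ε y‖) / t}
  have hgood : {i : Fin n |
      (∑ᶠ y ∈ {y : Fin r → ZMod p | y ≠ z ∧ ∀ x ∈ H i, ∑ j, x j * (y j - z j) = 0},
        ‖a y‖) ≤ (∑ y, ‖ε y‖) / t} = good := by
    ext i
    simp [good, S, ← finsum_mem_coe_finset, dotProduct]
  have hcover :
      univ ⊆ good ∪ ({i | (∑ y, ‖ε y‖) / t < ∑ y ∈ S i, ‖a y‖} : Finset _) := fun i _ => by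
    simpa [good] using le_or_gt _ _
  have hcard := (card_le_card hcover).trans (card_union_le _ _)
  rw [card_univ, Fintype.card_fin] at hcard
  have hn' : n = 4 * (t * (m - 1)) + 1 := by rw [hn, mul_assoc]
  rw [hgood, Set.ncard_coe_finset, mul_assoc]
  rw [mul_assoc] at hbad
  omega
end

section
/- Let T, T' be finite sets of characters with |T'| ≤ |T| = t, and let a : Ĝ → ℂ, f'' : Ĝ → ℂ. Suppose (i) for all χ ∈ T' ∪ {χ ∈ T : |a_χ| > 2E/t} we have |f''(χ) − a_χ| ≤ √2·E/t; (ii) T' consists of t characters maximizing |f''| among a set containing all χ with |a_χ| > 2E/t (or T' smaller only if no others have f'' ≠ 0); (iii) Σ_{χ ∉ T} |a_χ| ≤ E. Define f'(χ) = f''(χ) for χ ∈ T' and 0 otherwise. Then Σ_χ |a_χ − f'(χ)| ≤ (1 + 3√2) E. -/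
/-!
Off `T'` the output vanishes and on `T'` it is within `√2·E/t` of `a`, so the error is at most
`∑_{χ ∉ T'} |a_χ| + √2·E`, which differs from the tail `∑_{χ ∉ T} |a_χ| ≤ E` by trading the mass of
`T \ T'` for that of `T' \ T`. Each `χ ∈ T \ T'` costs at most `2√2·E/t` more than any
`χ' ∈ T' \ T`: either `|a_χ| ≤ 2E/t`, or `f''(χ)` is accurate and `|f''(χ)| ≤ |f''(χ')|`. If
`|T'| = t` the two differences have equal size and can be paired off; otherwise `f''` vanishes off
`T'`, which leaves no large coefficient in `T \ T'` at all.
-/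

open Finset

theorem Finset.sum_le_sum_add_card_nsmul_of_card_eq {α M : Type*} [AddCommMonoid M]
    [PartialOrder M] [IsOrderedAddMonoid M] {s u : Finset α} {f g : α → M} {δ : M}
    (hcard : #s = #u) (h : ∀ x ∈ s, ∀ y ∈ u, f x ≤ g y + δ) :
    ∑ x ∈ s, f x ≤ ∑ y ∈ u, g y + #s • δ := by
  let e := equivOfCardEq hcard
  calc ∑ x ∈ s, f x = ∑ x : s, f x := (sum_coe_sort s f).symm
    _ ≤ ∑ x : s, (g (e x) + δ) := sum_le_sum fun x _ => h x x.2 (e x) (e x).2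
    _ = ∑ y ∈ u, g y + #s • δ := by
      rw [sum_add_distrib, Equiv.sum_comp e (fun y => g y), sum_coe_sort, sum_const, card_univ,
        Fintype.card_coe]

theorem natCast_mul_div_le {n t : ℕ} {c : ℝ} (hc : 0 ≤ c) (hn : n ≤ t) :
    n * (c / t) ≤ c := by
  rcases t.eq_zero_or_pos with rfl | ht
  · simp [Nat.le_zero.mp hn, hc]
  · calc n * (c / t) ≤ t * (c / t) := by gcongr
      _ = c := mul_div_cancel₀ c (by positivity)

theorem norm_le_norm_add_two_mul_of_norm_le {G : Type*} [SeminormedAddCommGroup G]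
    {x y x' y' : G} {r ε : ℝ} (hr : r ≤ 2 * ε) (hx : r < ‖x‖ → ‖x' - x‖ ≤ ε)
    (hy : ‖y' - y‖ ≤ ε) (hsel : ‖x'‖ ≤ ‖y'‖) :
    ‖x‖ ≤ ‖y‖ + 2 * ε := by
  by_cases hlarge : r < ‖x‖
  · have hx' := norm_sub_norm_le x x'
    have hy' := norm_sub_norm_le y' y
    rw [norm_sub_rev] at hx'
    linarith [hx hlarge]
  · linarith [norm_nonneg y]

theorem sum_norm_sdiff_le_sum_norm_sdiff_add {ι : Type*} [DecidableEq ι] {t : ℕ} {E : ℝ}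
    (hE : 0 ≤ E) {T T' : Finset ι} (hT : #T = t) {a f'' : ι → ℂ}
    (hclose : ∀ χ, (χ ∈ T' ∨ (χ ∈ T ∧ 2 * E / t < ‖a χ‖)) →
      ‖f'' χ - a χ‖ ≤ √2 * E / t)
    (hsel : ∀ χ ∈ T', ∀ χ' ∉ T', ‖f'' χ'‖ ≤ ‖f'' χ‖)
    (hfull : #T' = t ∨ ∀ χ ∉ T', f'' χ = 0) :
    ∑ χ ∈ T \ T', ‖a χ‖ ≤ ∑ χ ∈ T' \ T, ‖a χ‖ + 2 * √2 * E := by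
  have hsqrt : 1 ≤ √2 := Real.one_le_sqrt.mpr one_le_two
  have hr : 2 * E / t ≤ 2 * (√2 * E / t) := by
    rw [← mul_div_assoc]
    gcongr
    nlinarith
  have hcard : #(T \ T') ≤ t := hT ▸ card_le_card sdiff_subset
  rcases hfull with hT'card | hzero
  · calc ∑ χ ∈ T \ T', ‖a χ‖
        ≤ ∑ χ ∈ T' \ T, ‖a χ‖ + #(T \ T') • (2 * (√2 * E / t)) :=
          sum_le_sum_add_card_nsmul_of_card_eq (card_sdiff_comm (hT.trans hT'card.symm))
            fun χ hχ χ' hχ' => norm_le_norm_add_two_mul_of_norm_le hr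
              (fun hlarge => hclose χ (.inr ⟨(mem_sdiff.mp hχ).1, hlarge⟩))
              (hclose χ' (.inl (mem_sdiff.mp hχ').1))
              (hsel χ' (mem_sdiff.mp hχ').1 χ (mem_sdiff.mp hχ).2)
      _ ≤ ∑ χ ∈ T' \ T, ‖a χ‖ + 2 * √2 * E := by
          have := natCast_mul_div_le (c := √2 * E) (by positivity) hcard
          rw [nsmul_eq_mul]
          linarith
  · have hsmall : ∀ χ ∈ T \ T', ‖a χ‖ ≤ 2 * E / t := by
      intro χ hχ
      obtain ⟨hχT, hχT'⟩ := mem_sdiff.mp hχ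
      by_contra! hlarge
      have := hclose χ (.inr ⟨hχT, hlarge⟩)
      rw [hzero χ hχT', zero_sub, norm_neg] at this
      have hsqrt_le : √2 * E / t ≤ 2 * E / t := by
        gcongr
        exact Real.sqrt_le_iff.mpr ⟨zero_le_two, by norm_num⟩
      linarith
    calc ∑ χ ∈ T \ T', ‖a χ‖ ≤ #(T \ T') • (2 * E / t) := sum_le_card_nsmul _ _ _ hsmall
      _ ≤ 2 * E := by
          rw [nsmul_eq_mul]
          exact natCast_mul_div_le (by positivity) hcard
      _ ≤ ∑ χ ∈ T' \ T, ‖a χ‖ + 2 * √2 * E := by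
          nlinarith [sum_nonneg fun χ (_ : χ ∈ T' \ T) => norm_nonneg (a χ)]

theorem stmt17_general {ι : Type*} [Fintype ι] [DecidableEq ι] (t : ℕ)
    (E : ℝ)
    (T T' : Finset ι) (hT : T.card = t) (hT' : T'.card ≤ t)
    (a f'' : ι → ℂ)
    (hclose : ∀ χ, (χ ∈ T' ∨ (χ ∈ T ∧ 2 * E / t < ‖a χ‖)) →
      ‖f'' χ - a χ‖ ≤ Real.sqrt 2 * E / t)
    (hsel : ∀ χ ∈ T', ∀ χ' ∉ T', ‖f'' χ'‖ ≤ ‖f'' χ‖)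
    (hfull : T'.card = t ∨ ∀ χ ∉ T', f'' χ = 0) :
    (∑ χ ∈ Finset.univ \ T, ‖a χ‖) ≤ E →
      ∑ χ, ‖a χ - (if χ ∈ T' then f'' χ else 0)‖ ≤ (1 + 3 * Real.sqrt 2) * E := by
  intro htail
  rw [← compl_eq_univ_sdiff] at htail
  have hE : 0 ≤ E := (sum_nonneg fun χ _ => norm_nonneg (a χ)).trans htail
  have hsplit : ∑ χ, ‖a χ - (if χ ∈ T' then f'' χ else 0)‖
      = ∑ χ ∈ T'ᶜ, ‖a χ‖ + ∑ χ ∈ T', ‖a χ - f'' χ‖ := by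
    rw [← sum_compl_add_sum T']
    congr 1 <;> refine sum_congr rfl fun χ hχ => ?_
    · rw [if_neg (mem_compl.mp hχ), sub_zero]
    · rw [if_pos hχ]
  have hexchange : ∑ χ ∈ T'ᶜ, ‖a χ‖ - ∑ χ ∈ Tᶜ, ‖a χ‖
      = ∑ χ ∈ T \ T', ‖a χ‖ - ∑ χ ∈ T' \ T, ‖a χ‖ := by
    rw [← sum_sdiff_sub_sum_sdiff, compl_sdiff_compl, compl_sdiff_compl]
  have hon : ∑ χ ∈ T', ‖a χ - f'' χ‖ ≤ √2 * E := by
    refine (sum_le_card_nsmul _ _ (√2 * E / t) fun χ hχ => ?_).trans ?_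
    · rw [norm_sub_rev]
      exact hclose χ (.inl hχ)
    · rw [nsmul_eq_mul]
      exact natCast_mul_div_le (by positivity) hT'
  have hoff := sum_norm_sdiff_le_sum_norm_sdiff_add hE hT hclose hsel hfull
  rw [hsplit]
  linarith

/-- final approximation estimate of Theorem 4: `a` is the true Fourier
coefficient vector, `T` (of size `t`) supports a best `t`-sparse approximation with tail
`Σ_{χ ∉ T} |a_χ| ≤ E`, `f''` are the median estimates with
`|f''(χ) − a_χ| ≤ √2·E/t` on `T'` and on the large coefficients of `T`, and `T'`
(of size at most `t`) picks characters maximizing `|f''|`, with `|T'| = t` unless all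
remaining values of `f''` vanish. Then the `t`-sparse output `f' = f''·𝟙_{T'}` satisfies
`Σ_χ |a_χ − f'(χ)| ≤ (1 + 3√2)·E`. -/
theorem stmt17 {ι : Type*} [Fintype ι] [DecidableEq ι] (t : ℕ) (ht : 1 ≤ t)
    (E : ℝ) (hE : 0 ≤ E)
    (T T' : Finset ι) (hT : T.card = t) (hT' : T'.card ≤ t)
    (a f'' : ι → ℂ)
    (hclose : ∀ χ, (χ ∈ T' ∨ (χ ∈ T ∧ 2 * E / t < ‖a χ‖)) →
      ‖f'' χ - a χ‖ ≤ Real.sqrt 2 * E / t)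
    (hsel : ∀ χ ∈ T', ∀ χ' ∉ T', ‖f'' χ'‖ ≤ ‖f'' χ‖)
    (hfull : T'.card = t ∨ ∀ χ ∉ T', f'' χ = 0) :
    (∑ χ ∈ Finset.univ \ T, ‖a χ‖) ≤ E →
      ∑ χ, ‖a χ - (if χ ∈ T' then f'' χ else 0)‖ ≤ (1 + 3 * Real.sqrt 2) * E :=
  stmt17_general t E T T' hT hT' a f'' hclose hsel hfull
end
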